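/- Let φ be a state on a finite-dimensional matrix algebra A = M_N with faithful (positive definite) density matrix D, and let a ∈ A. Define the operator â on the GNS Hilbert space (A with inner product ⟨x, y⟩ = Tr(D x* y)) by â(b) = b a. Then the operator norm of â satisfies ‖â‖ ≤ ‖D^{-1/2} a D^{1/2}‖, where the right-hand side is the usual operator norm on M_N. -/

import Mathlib

open Matrix
open scoped ComplexOrder

/-- The square root of a positive semidefinite matrix, as defined in the older Mathlib
(`Matrix.PosSemidef.sqrt`, since removed). -/
noncomputable def Matrix.PosSemidef.sqrt {n : Type*} [Fintype n] [DecidableEq n] {𝕜 : Type*}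
    [RCLike 𝕜] {A : Matrix n n 𝕜} (hA : A.PosSemidef) : Matrix n n 𝕜 :=
  hA.1.eigenvectorUnitary.1 * diagonal ((↑) ∘ (√·) ∘ hA.1.eigenvalues) *
    (star hA.1.eigenvectorUnitary : Matrix n n 𝕜)

section Aux

variable {n : Type*} [Fintype n] [DecidableEq n]

lemma frob_eq (Y : Matrix n n ℂ) :
    (Yᴴ * Y).trace.re =
      ∑ i, ‖toEuclideanCLM (𝕜 := ℂ) Y (EuclideanSpace.single i (1:ℂ))‖ ^ 2 := by
  have hcol : ∀ i, toEuclideanCLM (𝕜 := ℂ) Y (EuclideanSpace.single i (1:ℂ)) =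
      (WithLp.equiv 2 (n → ℂ)).symm (fun j => Y j i) := by
    intro i
    rw [show EuclideanSpace.single i (1:ℂ) = WithLp.toLp 2 (Pi.single i 1) from rfl,
      toEuclideanCLM_toLp]
    congr 1
    simp [Matrix.toLin'_apply]
    rfl
  simp only [hcol]
  rw [Matrix.trace, Complex.re_sum]
  refine Finset.sum_congr rfl fun i _ => ?_
  rw [EuclideanSpace.norm_eq, Real.sq_sqrt (by positivity)]
  simp [Matrix.diag, Matrix.mul_apply, Complex.re_sum, Matrix.conjTranspose_apply,
    Complex.mul_re, Complex.sq_norm, Complex.normSq_apply, sq]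
  refine Finset.sum_congr rfl fun j _ => ?_
  rw [← Complex.normSq_apply, ← Complex.sq_norm, sq]

set_option synthInstance.maxHeartbeats 1000000 in
lemma key_ineq (X M : Matrix n n ℂ) :
    ((X * M)ᴴ * (X * M)).trace.re ≤
      ‖toEuclideanCLM (𝕜 := ℂ) M‖ ^ 2 * (Xᴴ * X).trace.re := by
  have h1 : ((X * M)ᴴ * (X * M)).trace = (((X * M)ᴴ)ᴴ * (X * M)ᴴ).trace := by
    rw [conjTranspose_conjTranspose, Matrix.trace_mul_comm]
  have h2 : (X * Xᴴ).trace = ((Xᴴ)ᴴ * Xᴴ).trace := by rw [conjTranspose_conjTranspose]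
  rw [h1, frob_eq, conjTranspose_mul]
  have h3 : (Xᴴ * X).trace.re = (X * Xᴴ).trace.re := by rw [Matrix.trace_mul_comm]
  rw [h3, h2, frob_eq, Finset.mul_sum]
  refine Finset.sum_le_sum fun i _ => ?_
  rw [_root_.map_mul]
  calc ‖(toEuclideanCLM (𝕜 := ℂ) Mᴴ * toEuclideanCLM (𝕜 := ℂ) Xᴴ)
          (EuclideanSpace.single i (1:ℂ))‖ ^ 2
      ≤ (‖toEuclideanCLM (𝕜 := ℂ) Mᴴ‖ *
          ‖toEuclideanCLM (𝕜 := ℂ) Xᴴ (EuclideanSpace.single i (1:ℂ))‖) ^ 2 := by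
        gcongr
        exact (toEuclideanCLM (𝕜 := ℂ) Mᴴ).le_opNorm _
    _ = ‖toEuclideanCLM (𝕜 := ℂ) M‖ ^ 2 *
          ‖toEuclideanCLM (𝕜 := ℂ) Xᴴ (EuclideanSpace.single i (1:ℂ))‖ ^ 2 := by
        rw [mul_pow]
        congr 2
        rw [show Mᴴ = star M from rfl, map_star,
          ContinuousLinearMap.star_eq_adjoint]
        exact (ContinuousLinearMap.adjoint (𝕜 := ℂ)).norm_map _

end Aux

/-- GNS norm estimate: let `φ(x) = Tr(D x)` be a faithful state on `M_N` with
positive definite density `D` of trace 1, and equip `M_N` with the GNS inner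
product `⟨x, y⟩ = Tr(D x* y)`.  Then right multiplication `b ↦ b·a` by `a` is
bounded with norm at most `‖D^{-1/2} a D^{1/2}‖` (operator norm on `M_N`):
for every `b`, `‖b·a‖²_D ≤ ‖D^{-1/2} a D^{1/2}‖² · ‖b‖²_D`. -/
theorem gns_right_multiplication_bound {n : Type*} [Fintype n] [DecidableEq n]
    (D : Matrix n n ℂ) (hD : D.PosDef) (htr : D.trace = 1)
    (a : Matrix n n ℂ) :
    ∀ b : Matrix n n ℂ,
      (D * (b * a)ᴴ * (b * a)).trace.re ≤
        ‖toEuclideanCLM (𝕜 := ℂ)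
            ((hD.posSemidef.sqrt)⁻¹ * a * hD.posSemidef.sqrt)‖ ^ 2 *
          (D * bᴴ * b).trace.re := by
  intro b
  set S := hD.posSemidef.sqrt with hSdef
  have hSH : Sᴴ = S := by
    simp [hSdef, Matrix.PosSemidef.sqrt, conjTranspose_mul, diagonal_conjTranspose, mul_assoc,
      star_eq_conjTranspose]
    congr 3
    funext i
    simp
  have hSS : S * S = D := by
    conv_rhs => rw [hD.posSemidef.1.spectral_theorem, Unitary.conjStarAlgAut_apply]
    simp only [hSdef, Matrix.PosSemidef.sqrt, mul_assoc]
    rw [← mul_assoc (star _ : Matrix n n ℂ) _ _, Unitary.coe_star_mul_self, one_mul,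
      ← mul_assoc (diagonal _), diagonal_mul_diagonal]
    congr 3
    funext i
    simp only [Function.comp_apply]
    exact (RCLike.ofReal_mul _ _).symm.trans
      (congrArg _ (Real.mul_self_sqrt (hD.posSemidef.eigenvalues_nonneg i)))
  have hdet : IsUnit S.det := by
    have hDdet : D.det ≠ 0 := hD.det_pos.ne'
    rw [← hSS, det_mul] at hDdet
    exact isUnit_iff_ne_zero.2 (left_ne_zero_of_mul hDdet)
  have hfac : b * a * S = (b * S) * (S⁻¹ * a * S) := by
    have h : S * (S⁻¹ * a * S) = a * S := by
      rw [← mul_assoc, ← mul_assoc, mul_nonsing_inv _ hdet, one_mul]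
    rw [mul_assoc b S, h, ← mul_assoc]
  have e1 : ∀ c : Matrix n n ℂ, (D * cᴴ * c).trace = ((c * S)ᴴ * (c * S)).trace := by
    intro c
    calc (D * cᴴ * c).trace = (c * (D * cᴴ)).trace := Matrix.trace_mul_comm _ _
      _ = ((c * S) * (S * cᴴ)).trace := by rw [← hSS]; congr 1; noncomm_ring
      _ = ((S * cᴴ) * (c * S)).trace := Matrix.trace_mul_comm _ _
      _ = ((c * S)ᴴ * (c * S)).trace := by rw [conjTranspose_mul, hSH]
  rw [e1 (b * a), e1 b, hfac]
  exact key_ineq _ _
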